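/- Let m ≥ 1. Define the operators h̃, ẽ, f̃ on smooth complex-valued functions u on ℝ^m ∖ {0} by h̃u := 2Σ_{j=1}^m x_j ∂u/∂x_j + (m-1)u, ẽu := 2√(-1)|x|·u, and f̃u := (√(-1)/2)|x|·Δu. Then these operators satisfy the sl₂ commutation relations: [h̃, ẽ] = 2ẽ, [h̃, f̃] = −2f̃, and [ẽ, f̃] = h̃, where [A,B]u := A(Bu) − B(Au). -/

import Mathlib

open MeasureTheory Complex

/-- The Euclidean Laplacian `Δu(x) = Σ_j ∂²u/∂x_j²(x)` of a complex-valued function,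
computed via second derivatives along coordinate directions. -/
noncomputable def lapC {m : ℕ} (u : EuclideanSpace ℝ (Fin m) → ℂ)
    (x : EuclideanSpace ℝ (Fin m)) : ℂ :=
  ∑ j : Fin m, deriv (deriv (fun s : ℝ => u (x + s • EuclideanSpace.single j (1:ℝ)))) 0

/-- `h̃u = 2Σ_j x_j ∂u/∂x_j + (m-1)u`. -/
noncomputable def opH {m : ℕ} (u : EuclideanSpace ℝ (Fin m) → ℂ)
    (x : EuclideanSpace ℝ (Fin m)) : ℂ :=
  2 * ∑ j : Fin m, (x j : ℂ) * fderiv ℝ u x (EuclideanSpace.single j (1:ℝ)) +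
    ((m : ℂ) - 1) * u x

/-- `ẽu = 2√(-1)|x|·u`. -/
noncomputable def opE {m : ℕ} (u : EuclideanSpace ℝ (Fin m) → ℂ)
    (x : EuclideanSpace ℝ (Fin m)) : ℂ :=
  2 * Complex.I * (‖x‖ : ℂ) * u x

/-- `f̃u = (√(-1)/2)|x|·Δu`. -/
noncomputable def opF {m : ℕ} (u : EuclideanSpace ℝ (Fin m) → ℂ)
    (x : EuclideanSpace ℝ (Fin m)) : ℂ :=
  (Complex.I / 2) * (‖x‖ : ℂ) * lapC u x


open Complex Filter Topology RealInnerProductSpace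
noncomputable section
variable {m : ℕ}
abbrev Em (m : ℕ) := EuclideanSpace ℝ (Fin m)

noncomputable def pd (j : Fin m) (u : Em m → ℂ) (x : Em m) : ℂ :=
  fderiv ℝ u x (EuclideanSpace.single j (1:ℝ))

def Sm (u : Em m → ℂ) : Prop := ∀ x : Em m, x ≠ 0 → ContDiffAt ℝ ((⊤:ℕ∞) : WithTop ℕ∞) u x

/-- the complexified norm function -/
noncomputable def nC (m : ℕ) : Em m → ℂ := fun y => ((‖y‖:ℝ):ℂ)

theorem sm_nC : Sm (nC m) := fun x hx =>
  Complex.ofRealCLM.contDiff.contDiffAt.comp x (contDiffAt_norm ℝ hx)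

theorem hasFDerivAt_norm' {x : Em m} (hx : x ≠ 0) :
    HasFDerivAt (fun y : Em m => ‖y‖) ((‖x‖⁻¹ : ℝ) • innerSL ℝ x) x := by
  have hq := (hasFDerivAt_id x).inner ℝ (hasFDerivAt_id x)
  have hqx : ⟪x, x⟫ ≠ 0 := by
    rw [real_inner_self_eq_norm_mul_norm]
    exact mul_ne_zero (norm_ne_zero_iff.2 hx) (norm_ne_zero_iff.2 hx)
  have hs := Real.hasDerivAt_sqrt hqx
  have h := HasDerivAt.comp_hasFDerivAt (f := fun t : Em m => ⟪(id t : Em m), id t⟫) x hs hq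
  have he : ((fun t => Real.sqrt t) ∘ fun t : Em m => ⟪(id t : Em m), id t⟫) = fun y : Em m => ‖y‖ := by
    funext y
    simp only [Function.comp_apply, id]
    rw [real_inner_self_eq_norm_mul_norm, Real.sqrt_mul_self (norm_nonneg y)]
  rw [he] at h
  refine h.congr_fderiv ?_
  ext v
  have hn : Real.sqrt ⟪x, x⟫ = ‖x‖ := by
    rw [real_inner_self_eq_norm_mul_norm, Real.sqrt_mul_self (norm_nonneg x)]
  have hnx : ‖x‖ ≠ 0 := norm_ne_zero_iff.2 hx
  simp only [ContinuousLinearMap.coe_smul', Pi.smul_apply, innerSL_apply_apply,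
    ContinuousLinearMap.coe_comp', Function.comp_apply, ContinuousLinearMap.smul_apply,
    fderivInnerCLM_apply, ContinuousLinearMap.prod_apply, ContinuousLinearMap.coe_id', id_eq, hn]
  rw [real_inner_comm v x]
  field_simp
  ring

theorem Sm.diff {u : Em m → ℂ} (hu : Sm u) {x : Em m} (hx : x ≠ 0) :
    DifferentiableAt ℝ u x := (hu x hx).differentiableAt (by simp)

theorem Sm.pd {u : Em m → ℂ} (hu : Sm u) (j : Fin m) : Sm (pd j u) := by
  intro x hx
  have h1 : ContDiffAt ℝ ((⊤:ℕ∞) : WithTop ℕ∞) (fderiv ℝ u) x :=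
    (hu x hx).fderiv_right (m := (⊤:ℕ∞)) (by exact_mod_cast le_top)
  exact h1.clm_apply contDiffAt_const

theorem pd_nC {x : Em m} (hx : x ≠ 0) (j : Fin m) :
    pd j (nC m) x = (x j : ℂ) / (‖x‖ : ℂ) := by
  have h := Complex.ofRealCLM.hasFDerivAt.comp x (hasFDerivAt_norm' hx)
  rw [pd, show nC m = Complex.ofRealCLM ∘ fun y : Em m => ‖y‖ from rfl, h.fderiv]
  have hi : ⟪x, EuclideanSpace.single j (1:ℝ)⟫ = x j := by
    rw [EuclideanSpace.inner_single_right]; simp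
  simp [hi, div_eq_inv_mul]

/-- coordinate function -/
noncomputable def cf (j : Fin m) : Em m → ℂ := fun y => ((y j : ℝ) : ℂ)

theorem sm_cf (j : Fin m) : Sm (cf j) := fun x _ =>
  ((Complex.ofRealCLM.comp (EuclideanSpace.proj j : Em m →L[ℝ] ℝ)).contDiff.contDiffAt :)

theorem pd_cf (j k : Fin m) (x : Em m) :
    pd k (cf j) x = if j = k then 1 else 0 := by
  have h : HasFDerivAt (cf j) (Complex.ofRealCLM.comp (EuclideanSpace.proj j : Em m →L[ℝ] ℝ)) x :=
    (Complex.ofRealCLM.comp (EuclideanSpace.proj j : Em m →L[ℝ] ℝ)).hasFDerivAt (x := x)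
  rw [pd, h.fderiv]
  simp [EuclideanSpace.single_apply]
  split <;> simp_all

theorem pd_mul {a u : Em m → ℂ} {x : Em m} (ha : DifferentiableAt ℝ a x)
    (hb : DifferentiableAt ℝ u x) (j : Fin m) :
    pd j (fun y => a y * u y) x = pd j a x * u x + a x * pd j u x := by
  unfold pd
  rw [fderiv_fun_mul ha hb]
  simp only [ContinuousLinearMap.add_apply, ContinuousLinearMap.smul_apply, smul_eq_mul]
  ring

theorem pd_const_mul {u : Em m → ℂ} {x : Em m} (hb : DifferentiableAt ℝ u x) (c : ℂ) (j : Fin m) :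
    pd j (fun y => c * u y) x = c * pd j u x := by
  unfold pd
  rw [fderiv_const_mul hb]
  simp

theorem pd_add {a u : Em m → ℂ} {x : Em m} (ha : DifferentiableAt ℝ a x)
    (hb : DifferentiableAt ℝ u x) (j : Fin m) :
    pd j (fun y => a y + u y) x = pd j a x + pd j u x := by
  unfold pd
  rw [fderiv_fun_add ha hb]
  simp

theorem pd_sum {ι : Type*} (s : Finset ι) (f : ι → Em m → ℂ) {x : Em m}
    (hf : ∀ i ∈ s, DifferentiableAt ℝ (f i) x) (j : Fin m) :
    pd j (fun y => ∑ i ∈ s, f i y) x = ∑ i ∈ s, pd j (f i) x := by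
  unfold pd
  rw [fderiv_fun_sum hf]
  simp

theorem hasFDerivAt_invC {u : Em m → ℂ} {x : Em m} (hb : DifferentiableAt ℝ u x)
    (hux : u x ≠ 0) :
    HasFDerivAt (fun y => (u y)⁻¹)
      ((((ContinuousLinearMap.smulRight (1 : ℂ →L[ℂ] ℂ) (-((u x)^2)⁻¹)).restrictScalars ℝ)).comp
        (fderiv ℝ u x)) x := by
  have h1 := ((hasDerivAt_inv hux).hasFDerivAt.restrictScalars ℝ)
  exact h1.comp x hb.hasFDerivAt

theorem diff_inv {u : Em m → ℂ} {x : Em m} (hb : DifferentiableAt ℝ u x) (hux : u x ≠ 0) :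
    DifferentiableAt ℝ (fun y => (u y)⁻¹) x := (hasFDerivAt_invC hb hux).differentiableAt

theorem pd_inv {u : Em m → ℂ} {x : Em m} (hb : DifferentiableAt ℝ u x) (hux : u x ≠ 0)
    (j : Fin m) : pd j (fun y => (u y)⁻¹) x = - pd j u x / (u x)^2 := by
  rw [pd, (hasFDerivAt_invC hb hux).fderiv]
  simp only [ContinuousLinearMap.coe_comp', Function.comp_apply,
    ContinuousLinearMap.coe_restrictScalars', ContinuousLinearMap.smulRight_apply,
    ContinuousLinearMap.one_apply, smul_eq_mul]
  rw [pd]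
  field_simp

theorem pd_div {a u : Em m → ℂ} {x : Em m} (ha : DifferentiableAt ℝ a x)
    (hb : DifferentiableAt ℝ u x) (hux : u x ≠ 0) (j : Fin m) :
    pd j (fun y => a y / u y) x = (pd j a x * u x - a x * pd j u x) / (u x)^2 := by
  have h1 : pd j (fun y => a y * (u y)⁻¹) x = pd j a x * (u x)⁻¹ + a x * pd j (fun y => (u y)⁻¹) x :=
    pd_mul ha (diff_inv hb hux) j
  simp only [div_eq_mul_inv]
  rw [h1, pd_inv hb hux]
  field_simp
  ring

theorem pd_comm {u : Em m → ℂ} (hu : Sm u) {x : Em m} (hx : x ≠ 0) (j k : Fin m) :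
    pd j (pd k u) x = pd k (pd j u) x := by
  have hdf : DifferentiableAt ℝ (fderiv ℝ u) x :=
    ((hu x hx).fderiv_right (m := (⊤:ℕ∞)) (by exact_mod_cast le_top)).differentiableAt
      (by simp)
  have key : ∀ a b : Fin m, pd a (pd b u) x =
      fderiv ℝ (fderiv ℝ u) x (EuclideanSpace.single a 1) (EuclideanSpace.single b 1) := by
    intro a b
    have hc := (ContinuousLinearMap.apply ℝ ℂ (EuclideanSpace.single b (1:ℝ))).hasFDerivAt
      (x := fderiv ℝ u x)
    have hcomp : HasFDerivAt (pd b u) ((ContinuousLinearMap.apply ℝ ℂ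
        (EuclideanSpace.single b (1:ℝ))).comp (fderiv ℝ (fderiv ℝ u) x)) x :=
      hc.comp x hdf.hasFDerivAt
    rw [pd, hcomp.fderiv]
    simp
  rw [key j k, key k j]
  exact (hu x hx).isSymmSndFDerivAt (by simp; exact WithTop.coe_le_coe.2 le_top) _ _
/-- chain rule along a line -/
theorem hasDerivAt_line {u : Em m → ℂ} {y : Em m} (hu : DifferentiableAt ℝ u y)
    (x v : Em m) (s : ℝ) (hy : y = x + s • v) :
    HasDerivAt (fun t : ℝ => u (x + t • v)) (fderiv ℝ u y v) s := by
  have h1 : HasDerivAt (fun t : ℝ => x + t • v) v s := by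
    simpa using ((hasDerivAt_id s).smul_const v).const_add x
  subst hy
  exact (hu.hasFDerivAt.comp_hasDerivAt s h1)

theorem lapC_eq {u : Em m → ℂ} (hu : Sm u) {x : Em m} (hx : x ≠ 0) :
    lapC u x = ∑ j : Fin m, pd j (pd j u) x := by
  unfold lapC
  refine Finset.sum_congr rfl fun j _ => ?_
  set v := EuclideanSpace.single j (1:ℝ)
  have hop : ∀ᶠ s in 𝓝 (0:ℝ), x + s • v ≠ 0 := by
    have hc : Continuous fun s : ℝ => x + s • v := by continuity
    have : {y : Em m | y ≠ 0} ∈ 𝓝 x := isOpen_ne.mem_nhds hx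
    have := hc.continuousAt (x := (0:ℝ)) |>.preimage_mem_nhds (by simpa using this)
    have h' : {a : ℝ | ¬x + a • v = 0} ∈ 𝓝 0 := by simpa using this
    exact h'
  have h1 : (deriv fun s : ℝ => u (x + s • v)) =ᶠ[𝓝 (0:ℝ)] fun s => pd j u (x + s • v) := by
    filter_upwards [hop] with s hs
    exact (hasDerivAt_line (hu.diff hs) x v s rfl).deriv
  rw [h1.deriv_eq]
  have h2 : HasDerivAt (fun s : ℝ => pd j u (x + s • v)) (pd j (pd j u) x) 0 := by
    have := hasDerivAt_line ((hu.pd j).diff hx) x v 0 (by simp)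
    simpa [pd] using this
  exact h2.deriv

theorem nC_ne {x : Em m} (hx : x ≠ 0) : nC m x ≠ 0 := by
  simp [nC, hx]

theorem Sm.mul {a b : Em m → ℂ} (ha : Sm a) (hb : Sm b) : Sm (fun y => a y * b y) :=
  fun x hx => (ha x hx).mul (hb x hx)

theorem Sm.add {a b : Em m → ℂ} (ha : Sm a) (hb : Sm b) : Sm (fun y => a y + b y) :=
  fun x hx => (ha x hx).add (hb x hx)

theorem Sm.const_mul {b : Em m → ℂ} (hb : Sm b) (c : ℂ) : Sm (fun y => c * b y) :=
  fun x hx => contDiffAt_const.mul (hb x hx)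

theorem Sm.sum {ι : Type*} {s : Finset ι} {f : ι → Em m → ℂ} (hf : ∀ i ∈ s, Sm (f i)) :
    Sm (fun y => ∑ i ∈ s, f i y) :=
  fun x hx => ContDiffAt.sum (fun i hi => hf i hi x hx)

theorem pd_congr {f g : Em m → ℂ} {x : Em m} (h : f =ᶠ[nhds x] g) (j : Fin m) :
    pd j f x = pd j g x := by
  unfold pd; rw [h.fderiv_eq]

theorem diff_div {a b : Em m → ℂ} {x : Em m} (ha : DifferentiableAt ℝ a x)
    (hb : DifferentiableAt ℝ b x) (hbx : b x ≠ 0) :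
    DifferentiableAt ℝ (fun y => a y / b y) x := by
  simp only [div_eq_mul_inv]
  exact ha.mul (diff_inv hb hbx)

theorem pd_nC' {x : Em m} (hx : x ≠ 0) (j : Fin m) :
    pd j (nC m) x = cf j x / nC m x := pd_nC hx j

theorem sum_cf_sq (x : Em m) : ∑ j, cf j x * cf j x = (nC m x)^2 := by
  have h1 : ∑ j, x j * x j = ‖x‖^2 := by
    rw [EuclideanSpace.norm_eq, Real.sq_sqrt (Finset.sum_nonneg fun i _ => sq_nonneg _)]; simp [sq]
  unfold cf nC
  rw [show ∑ j, ((x j : ℝ):ℂ) * ((x j : ℝ):ℂ) = ((∑ j, x j * x j : ℝ) : ℂ) by push_cast; rfl, h1]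
  push_cast
  ring

theorem sum_cf_pd_nC {x : Em m} (hx : x ≠ 0) :
    ∑ j, cf j x * pd j (nC m) x = nC m x := by
  have hR := nC_ne (m := m) hx
  calc ∑ j, cf j x * pd j (nC m) x = ∑ j, cf j x * cf j x / nC m x := by
        refine Finset.sum_congr rfl fun j _ => ?_
        rw [pd_nC' hx j]; ring
    _ = (∑ j, cf j x * cf j x) / nC m x := by rw [Finset.sum_div]
    _ = nC m x := by rw [sum_cf_sq]; field_simp

/-- `opE u` rewritten in terms of `nC`. -/
theorem opE_eq (u : Em m → ℂ) : opE u = fun y => (2 * Complex.I) * (nC m y * u y) := by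
  funext y; simp only [opE, nC]; ring

theorem Sm.opE {u : Em m → ℂ} (hS : Sm u) : Sm (opE u) := by
  rw [opE_eq]; exact (sm_nC.mul hS).const_mul _

theorem pdE {u : Em m → ℂ} (hS : Sm u) {y : Em m} (hy : y ≠ 0) (j : Fin m) :
    pd j (opE u) y = 2 * Complex.I * (pd j (nC m) y * u y + nC m y * pd j u y) := by
  rw [opE_eq]
  rw [pd_const_mul ((sm_nC.diff hy).fun_mul (hS.diff hy)) _ j,
    pd_mul (sm_nC.diff hy) (hS.diff hy) j]

theorem opH_eq (u : Em m → ℂ) :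
    opH u = fun y => 2 * ∑ j, cf j y * pd j u y + ((m:ℂ) - 1) * u y := rfl

theorem Sm.opH {u : Em m → ℂ} (hS : Sm u) : Sm (opH u) := by
  rw [opH_eq]
  exact ((Sm.sum (fun j _ => (sm_cf j).mul (hS.pd j))).const_mul 2).add (hS.const_mul _)

theorem delta_sum (k : Fin m) (f : Fin m → ℂ) :
    ∑ j, (if j = k then (1:ℂ) else 0) * f j = f k := by
  simp [ite_mul]

theorem pdH {u : Em m → ℂ} (hS : Sm u) {y : Em m} (hy : y ≠ 0) (k : Fin m) :
    pd k (opH u) y = 2 * (pd k u y + ∑ j, cf j y * pd k (pd j u) y)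
      + ((m:ℂ) - 1) * pd k u y := by
  rw [opH_eq]
  have hd1 : ∀ j : Fin m, DifferentiableAt ℝ (fun y => cf j y * pd j u y) y :=
    fun j => ((sm_cf j).diff hy).mul ((hS.pd j).diff hy)
  have hdsum : DifferentiableAt ℝ (fun y => ∑ j, cf j y * pd j u y) y :=
    DifferentiableAt.fun_sum (fun j _ => hd1 j)
  rw [pd_add (hdsum.const_mul 2) ((hS.diff hy).const_mul _) k,
    pd_const_mul hdsum 2 k, pd_const_mul (hS.diff hy) _ k,
    pd_sum _ _ (fun j _ => hd1 j) k]
  congr 2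
  calc ∑ j, pd k (fun y => cf j y * pd j u y) y
      = ∑ j, ((if j = k then (1:ℂ) else 0) * pd j u y + cf j y * pd k (pd j u) y) := by
        refine Finset.sum_congr rfl fun j _ => ?_
        rw [pd_mul ((sm_cf j).diff hy) ((hS.pd j).diff hy) k, pd_cf j k]
    _ = pd k u y + ∑ j, cf j y * pd k (pd j u) y := by
        rw [Finset.sum_add_distrib, delta_sum]

theorem part1 {u : Em m → ℂ} (hS : Sm u) {x : Em m} (hx : x ≠ 0) :
    opH (opE u) x - opE (opH u) x = 2 * opE u x := by
  have hsum : ∑ j, cf j x * pd j (opE u) x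
      = (2 * Complex.I * u x) * nC m x
        + (2 * Complex.I * nC m x) * ∑ j, cf j x * pd j u x := by
    calc ∑ j, cf j x * pd j (opE u) x
        = ∑ j, ((2 * Complex.I * u x) * (cf j x * pd j (nC m) x)
            + (2 * Complex.I * nC m x) * (cf j x * pd j u x)) := by
          refine Finset.sum_congr rfl fun j _ => ?_
          rw [pdE hS hx j]; ring
      _ = _ := by
          rw [Finset.sum_add_distrib, ← Finset.mul_sum, ← Finset.mul_sum, sum_cf_pd_nC hx]
  have e1 : opH (opE u) x = 2 * (∑ j, cf j x * pd j (opE u) x) + ((m:ℂ)-1) * opE u x := rfl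
  have e2 : opE (opH u) x
      = 2 * Complex.I * nC m x * (2 * (∑ j, cf j x * pd j u x) + ((m:ℂ)-1) * u x) := rfl
  have e3 : opE u x = 2 * Complex.I * nC m x * u x := rfl
  rw [e1, e2, e3, hsum]; ring

theorem part3 {u : Em m → ℂ} (hS : Sm u) {x : Em m} (hx : x ≠ 0) :
    opE (opF u) x - opF (opE u) x = opH u x := by
  have hev0 : ∀ᶠ y in nhds x, y ≠ 0 := isOpen_ne.mem_nhds hx
  have hR := nC_ne (m := m) hx
  -- the Laplacian of opE u
  have hterm : ∀ k : Fin m, pd k (pd k (opE u)) x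
      = 2 * Complex.I * u x / nC m x
        - (2 * Complex.I * u x / (nC m x)^3) * (cf k x * cf k x)
        + (4 * Complex.I / nC m x) * (cf k x * pd k u x)
        + (2 * Complex.I * nC m x) * pd k (pd k u) x := by
    intro k
    have hevk : pd k (opE u) =ᶠ[nhds x]
        (fun y => 2 * Complex.I * ((cf k y / nC m y) * u y + nC m y * pd k u y)) := by
      filter_upwards [hev0] with y hy
      rw [pdE hS hy k, pd_nC' hy k]
    rw [pd_congr hevk k]
    have hdA : DifferentiableAt ℝ (fun y => (cf k y / nC m y) * u y) x :=
      (diff_div ((sm_cf k).diff hx) (sm_nC.diff hx) hR).mul (hS.diff hx)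
    have hdB : DifferentiableAt ℝ (fun y => nC m y * pd k u y) x :=
      (sm_nC.diff hx).mul ((hS.pd k).diff hx)
    rw [show (fun y => 2 * Complex.I * ((cf k y / nC m y) * u y + nC m y * pd k u y))
        = (fun y => (2 * Complex.I) * (((fun z => (cf k z / nC m z) * u z) y)
          + ((fun z => nC m z * pd k u z) y))) from rfl,
      pd_const_mul (hdA.fun_add hdB) _ k, pd_add hdA hdB k,
      pd_mul (diff_div ((sm_cf k).diff hx) (sm_nC.diff hx) hR) (hS.diff hx) k,
      pd_mul (sm_nC.diff hx) ((hS.pd k).diff hx) k,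
      pd_div ((sm_cf k).diff hx) (sm_nC.diff hx) hR k, pd_cf k k, pd_nC' hx k]
    simp only [if_pos rfl, eq_self_iff_true, if_true]
    field_simp [hR]
    ring
  have hlapE : lapC (opE u) x
      = (m : ℂ) * (2 * Complex.I * u x / nC m x)
        - (2 * Complex.I * u x / (nC m x)^3) * (nC m x)^2
        + (4 * Complex.I / nC m x) * (∑ k, cf k x * pd k u x)
        + (2 * Complex.I * nC m x) * (∑ k, pd k (pd k u) x) := by
    rw [lapC_eq hS.opE hx, Finset.sum_congr rfl (fun k _ => hterm k)]
    rw [Finset.sum_add_distrib, Finset.sum_add_distrib, Finset.sum_sub_distrib,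
      ← Finset.mul_sum, ← Finset.mul_sum, ← Finset.mul_sum, sum_cf_sq,
      Finset.sum_const, Finset.card_univ, Fintype.card_fin, nsmul_eq_mul]
  have e1 : opE (opF u) x
      = 2 * Complex.I * nC m x * (Complex.I / 2 * nC m x * lapC u x) := rfl
  have e2 : opF (opE u) x = Complex.I / 2 * nC m x * lapC (opE u) x := rfl
  have e3 : opH u x = 2 * (∑ j, cf j x * pd j u x) + ((m:ℂ)-1) * u x := rfl
  have hlapE' : nC m x * lapC (opE u) x
      = 2*Complex.I*((m:ℂ)-1)*u x + 4*Complex.I*(∑ k, cf k x * pd k u x)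
        + 2*Complex.I*(nC m x)^2*(∑ k, pd k (pd k u) x) := by
    rw [hlapE]; field_simp [hR]
  rw [e1, e2, e3, lapC_eq hS hx, mul_assoc (Complex.I/2) (nC m x) (lapC (opE u) x), hlapE']
  ring_nf
  rw [Complex.I_sq]
  ring

/-- the (pointwise) Laplacian as a function -/
noncomputable def lam (u : Em m → ℂ) : Em m → ℂ := fun y => ∑ k, pd k (pd k u) y

theorem lam_apply (u : Em m → ℂ) (x : Em m) : lam u x = ∑ k, pd k (pd k u) x := rfl

theorem part2 {u : Em m → ℂ} (hS : Sm u) {x : Em m} (hx : x ≠ 0) :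
    opH (opF u) x - opF (opH u) x = -2 * opF u x := by
  have hev0 : ∀ᶠ y in nhds x, y ≠ 0 := isOpen_ne.mem_nhds hx
  have hR := nC_ne (m := m) hx
  have hSmΛ : Sm (lam u) := Sm.sum (fun k _ => (hS.pd k).pd k)
  -- opF u agrees with a nice function near x
  have hFev : opF u =ᶠ[nhds x] (fun y => (Complex.I / 2) * (nC m y * lam u y)) := by
    filter_upwards [hev0] with y hy
    show Complex.I / 2 * nC m y * lapC u y = Complex.I / 2 * (nC m y * lam u y)
    rw [lapC_eq hS hy, lam_apply]; ring
  have hpdF : ∀ j : Fin m, pd j (opF u) x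
      = (Complex.I / 2) * (pd j (nC m) x * lam u x + nC m x * pd j (lam u) x) := by
    intro j
    rw [pd_congr hFev j,
      pd_const_mul ((sm_nC.diff hx).fun_mul (hSmΛ.diff hx)) _ j,
      pd_mul (sm_nC.diff hx) (hSmΛ.diff hx) j]
  -- third derivative symmetry
  have hswap : ∀ j k : Fin m, pd k (pd k (pd j u)) x = pd j (fun y => pd k (pd k u) y) x := by
    intro j k
    have h1 : pd k (pd j u) =ᶠ[nhds x] pd j (pd k u) := by
      filter_upwards [hev0] with y hy
      exact pd_comm hS hy k j
    calc pd k (pd k (pd j u)) x = pd k (pd j (pd k u)) x := pd_congr h1 k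
      _ = pd j (pd k (pd k u)) x := pd_comm (hS.pd k) hx k j
      _ = _ := rfl
  -- Laplacian of opH u
  have hterm : ∀ k : Fin m, pd k (pd k (opH u)) x
      = ((m:ℂ) + 3) * pd k (pd k u) x
        + 2 * ∑ j, cf j x * pd j (fun y => pd k (pd k u) y) x := by
    intro k
    have hevk : pd k (opH u) =ᶠ[nhds x]
        (fun y => 2 * (pd k u y + ∑ j, cf j y * pd k (pd j u) y) + ((m:ℂ)-1) * pd k u y) := by
      filter_upwards [hev0] with y hy
      exact pdH hS hy k
    rw [pd_congr hevk k]
    have hd1 : ∀ j : Fin m, DifferentiableAt ℝ (fun y => cf j y * pd k (pd j u) y) x :=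
      fun j => ((sm_cf j).diff hx).mul (((hS.pd j).pd k).diff hx)
    have hdsum : DifferentiableAt ℝ (fun y => ∑ j, cf j y * pd k (pd j u) y) x :=
      DifferentiableAt.fun_sum (fun j _ => hd1 j)
    have hdin : DifferentiableAt ℝ (fun y => pd k u y + ∑ j, cf j y * pd k (pd j u) y) x :=
      ((hS.pd k).diff hx).add hdsum
    rw [pd_add (hdin.const_mul 2) (((hS.pd k).diff hx).const_mul _) k,
      pd_const_mul hdin 2 k, pd_const_mul ((hS.pd k).diff hx) _ k,
      pd_add ((hS.pd k).diff hx) hdsum k, pd_sum _ _ (fun j _ => hd1 j) k]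
    have hinner : ∑ j, pd k (fun y => cf j y * pd k (pd j u) y) x
        = pd k (pd k u) x + ∑ j, cf j x * pd j (fun y => pd k (pd k u) y) x := by
      calc ∑ j, pd k (fun y => cf j y * pd k (pd j u) y) x
          = ∑ j, ((if j = k then (1:ℂ) else 0) * pd k (pd j u) x
              + cf j x * pd j (fun y => pd k (pd k u) y) x) := by
            refine Finset.sum_congr rfl fun j _ => ?_
            rw [pd_mul ((sm_cf j).diff hx) (((hS.pd j).pd k).diff hx) k, hswap j k, pd_cf j k]
        _ = pd k (pd k u) x + ∑ j, cf j x * pd j (fun y => pd k (pd k u) y) x := by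
            rw [Finset.sum_add_distrib, delta_sum]
    rw [hinner]
    ring
  have hT : ∀ j : Fin m, pd j (lam u) x = ∑ k, pd j (fun y => pd k (pd k u) y) x := by
    intro j
    show pd j (fun y => ∑ k, pd k (pd k u) y) x = _
    exact pd_sum _ _ (fun k _ => ((hS.pd k).pd k).diff hx) j
  have hlapH : lapC (opH u) x = ((m:ℂ) + 3) * lam u x + 2 * ∑ j, cf j x * pd j (lam u) x := by
    rw [lapC_eq hS.opH hx]
    calc ∑ k, pd k (pd k (opH u)) x
        = ∑ k, (((m:ℂ)+3) * pd k (pd k u) x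
            + 2 * ∑ j, cf j x * pd j (fun y => pd k (pd k u) y) x) :=
          Finset.sum_congr rfl (fun k _ => hterm k)
      _ = ((m:ℂ)+3) * (∑ k, pd k (pd k u) x)
            + 2 * ∑ j, cf j x * ∑ k, pd j (fun y => pd k (pd k u) y) x := by
          rw [Finset.sum_add_distrib, ← Finset.mul_sum, ← Finset.mul_sum, Finset.sum_comm]
          congr 1
          congr 1
          refine Finset.sum_congr rfl fun j _ => ?_
          rw [Finset.mul_sum]
      _ = ((m:ℂ)+3) * lam u x + 2 * ∑ j, cf j x * pd j (lam u) x := by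
          rw [lam_apply]
          congr 1
          congr 1
          exact Finset.sum_congr rfl fun j _ => by rw [hT j]
  -- assemble
  have e1 : opH (opF u) x = 2 * (∑ j, cf j x * pd j (opF u) x) + ((m:ℂ)-1) * opF u x := rfl
  have e2 : opF (opH u) x = Complex.I / 2 * nC m x * lapC (opH u) x := rfl
  have e3 : opF u x = Complex.I / 2 * nC m x * lapC u x := rfl
  have hsum : ∑ j, cf j x * pd j (opF u) x
      = (Complex.I / 2 * lam u x) * nC m x
        + (Complex.I / 2 * nC m x) * ∑ j, cf j x * pd j (lam u) x := by
    calc ∑ j, cf j x * pd j (opF u) x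
        = ∑ j, ((Complex.I / 2 * lam u x) * (cf j x * pd j (nC m) x)
            + (Complex.I / 2 * nC m x) * (cf j x * pd j (lam u) x)) := by
          refine Finset.sum_congr rfl fun j _ => ?_
          rw [hpdF j]; ring
      _ = _ := by
          rw [Finset.sum_add_distrib, ← Finset.mul_sum, ← Finset.mul_sum, sum_cf_pd_nC hx]
  have hlapu : lapC u x = lam u x := by rw [lapC_eq hS hx, lam_apply]
  rw [e1, e2, e3, hsum, hlapH, hlapu]
  ring

end

/-- The operators `h̃, ẽ, f̃` satisfy the `sl₂` commutation relations
`[h̃,ẽ] = 2ẽ`, `[h̃,f̃] = −2f̃`, `[ẽ,f̃] = h̃` on smooth functions on `ℝ^m ∖ {0}`. -/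
theorem sl2_commutation_relations (m : ℕ) (hm : 1 ≤ m)
    (u : EuclideanSpace ℝ (Fin m) → ℂ)
    (hu : ContDiffOn ℝ (⊤ : ℕ∞) u {x : EuclideanSpace ℝ (Fin m) | x ≠ 0}) :
    ∀ x : EuclideanSpace ℝ (Fin m), x ≠ 0 →
      opH (opE u) x - opE (opH u) x = 2 * opE u x ∧
      opH (opF u) x - opF (opH u) x = -2 * opF u x ∧
      opE (opF u) x - opF (opE u) x = opH u x := by
  intro x hx
  have hS : Sm u := fun y hy =>
    ((hu.contDiffAt (isOpen_ne.mem_nhds hy)).of_le (by simp))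
  exact ⟨part1 hS hx, part2 hS hx, part3 hS hx⟩
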